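/- arXiv:1505.03421 — 7 statements merged into one kernel-verified Lean document; each statement's English description precedes it below -/
import Mathlib

section
/- Let b : Fin 5 → ℝ be the bandwidths b 0 = b 1 = 7/20, b 2 = b 3 = 9/20 and b 4 = 3/10, and let r₀ : Fin 4 → Fin 2 be the symmetric assignment r₀ 0 = r₀ 2 = 0 and r₀ 1 = r₀ 3 = 1 of the first four flows. Then: (a) r₀ is feasible; (b) there exists a feasible assignment of all five flows; but (c) for every assignment r : Fin 4 → Fin 2 reachable from r₀ by single-flow reroute steps and every edge e : Fin 2, the extension of r that places flow 4 on edge e is not feasible. Hence the new flow can only be accommodated by simultaneously rerouting two flows (a flow swap), never by any sequence of feasibility-preserving single-flow reroutes. -/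
open Finset

/-- The load on edge `e`: the sum of the bandwidths of the flows assigned to `e`. -/
noncomputable def load {ι : Type*} [Fintype ι] {m : ℕ} (b : ι → ℝ) (r : ι → Fin m)
    (e : Fin m) : ℝ :=
  ∑ i ∈ univ.filter (fun i => r i = e), b i

/-- An assignment is feasible if the load of every edge is at most the capacity 1. -/
def Feasible {ι : Type*} [Fintype ι] {m : ℕ} (b : ι → ℝ) (r : ι → Fin m) : Prop :=
  ∀ e, load b r e ≤ 1

/-- A single-flow reroute step: `r'` is feasible and differs from `r` at exactly one index. -/
def Step {ι : Type*} [Fintype ι] {m : ℕ} (b : ι → ℝ) (r r' : ι → Fin m) : Prop :=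
  Feasible b r' ∧ ∃! i, r' i ≠ r i

/-- `r'` is reachable from a feasible `r` by a sequence of single-flow reroute steps. -/
def Reachable {ι : Type*} [Fintype ι] {m : ℕ} (b : ι → ℝ) (r r' : ι → Fin m) : Prop :=
  Feasible b r ∧ Relation.ReflTransGen (Step b) r r'

/-- The bandwidths of the five flows. -/
noncomputable def b : Fin 5 → ℝ := ![7/20, 7/20, 9/20, 9/20, 3/10]

/-- The bandwidths of the first four flows. -/
noncomputable def b4 : Fin 4 → ℝ := fun i => b i.castSucc

/-- The symmetric assignment of the first four flows. -/
def r₀ : Fin 4 → Fin 2 := ![0, 1, 0, 1]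

/-! Every single reroute from `r₀` overloads its target edge: each edge carries `4/5` and every
flow has bandwidth at least `7/20`. So `r₀` is the only assignment reachable from itself, and adding
the flow of bandwidth `3/10` to an edge of load `4/5` exceeds the capacity. Yet routing flows
`0, 1, 4` over edge `0` and flows `2, 3` over edge `1` fits. -/

section Reroute

variable {ι : Type*} [Fintype ι] {m : ℕ} {b : ι → ℝ}

theorem load_update_self [DecidableEq ι] {r : ι → Fin m} {i : ι} {e : Fin m} (h : r i ≠ e) :
    load b (Function.update r i e) e = load b r e + b i := by
  have hfilter : univ.filter (fun j => Function.update r i e j = e)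
      = insert i (univ.filter (fun j => r j = e)) := by
    ext j
    by_cases hj : j = i <;> simp [hj]
  rw [load, hfilter, sum_insert (by simpa using h), add_comm, load]

theorem Step.eq_update [DecidableEq ι] {r r' : ι → Fin m} (h : Step b r r') :
    ∃ i, r i ≠ r' i ∧ r' = Function.update r i (r' i) := by
  obtain ⟨-, i, hi, huniq⟩ := h
  refine ⟨i, Ne.symm hi, funext fun j => ?_⟩
  by_cases hj : j = i
  · simp [hj]
  · rw [Function.update_of_ne hj]
    exact not_not.mp (mt (huniq j) hj)

theorem Step.exists_load_add_le {r r' : ι → Fin m} (h : Step b r r') :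
    ∃ i, load b r (r' i) + b i ≤ 1 := by
  classical
  obtain ⟨i, hne, hr'⟩ := h.eq_update
  refine ⟨i, ?_⟩
  rw [← load_update_self hne, ← hr']
  exact h.1 _

theorem not_step_of_lt_load_add {r : ι → Fin m} (h : ∀ i e, 1 < load b r e + b i)
    (r' : ι → Fin m) : ¬ Step b r r' := fun hstep =>
  let ⟨i, hle⟩ := hstep.exists_load_add_le
  (h i _).not_ge hle

theorem eq_of_reachable_of_forall_not_step {r r' : ι → Fin m} (h : ∀ r'', ¬ Step b r r'')
    (hr : Reachable b r r') : r' = r := by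
  rcases hr.2.cases_head with hrr | ⟨r'', hstep, -⟩
  · exact hrr.symm
  · exact absurd hstep (h r'')

end Reroute

theorem load_snoc_self {n m : ℕ} (b : Fin (n + 1) → ℝ) (r : Fin n → Fin m) (e : Fin m) :
    load b (Fin.snoc r e : Fin (n + 1) → Fin m) e
      = load (fun i => b i.castSucc) r e + b (Fin.last n) := by
  simp [load, sum_filter, Fin.sum_univ_castSucc]

theorem load_b4_r₀ (e : Fin 2) : load b4 r₀ e = 4 / 5 := by
  rw [load, sum_filter, Fin.sum_univ_four]
  fin_cases e <;> simp [b4, b, r₀] <;> norm_num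

theorem seven_twentieths_le_b4 (i : Fin 4) : 7 / 20 ≤ b4 i := by
  fin_cases i <;> simp [b4, b] <;> norm_num

theorem feasible_b : Feasible b (![0, 0, 1, 1, 0] : Fin 5 → Fin 2) := by
  intro e
  rw [load, sum_filter, Fin.sum_univ_five]
  fin_cases e <;> simp [b] <;> norm_num

theorem stmt3 :
    Feasible b4 r₀ ∧
    (∃ r : Fin 5 → Fin 2, Feasible b r) ∧
    ∀ r : Fin 4 → Fin 2, Reachable b4 r₀ r →
      ∀ e : Fin 2, ¬ Feasible b (Fin.snoc r e) := by
  refine ⟨fun e => by norm_num [load_b4_r₀], ⟨_, feasible_b⟩, ?_⟩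
  rintro r hr e hfeas
  have hstuck : ∀ r', ¬ Step b4 r₀ r' :=
    not_step_of_lt_load_add fun i e => by
      linarith [load_b4_r₀ e, seven_twentieths_le_b4 i]
  obtain rfl := eq_of_reachable_of_forall_not_step hstuck hr
  have hload : load b (Fin.snoc r₀ e : Fin 5 → Fin 2) e = 4 / 5 + 3 / 10 := by
    rw [load_snoc_self, ← load_b4_r₀ e]
    rfl
  have := hfeas e
  linarith
end

section
/- Let n, i, j be natural numbers with n ≥ 2, i ≤ n and j ≤ n − 1, and let g be a real number with g > 0. If |j · (g/(n − 1)) − i · (g/n)| < g/(n − 1) − g/n, then either i = 0 and j = 0, or i = n and j = n − 1. -/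
theorem stmt13 (n i j : ℕ) (hn : 2 ≤ n) (hi : i ≤ n) (hj : j ≤ n - 1)
    (g : ℝ) (hg : 0 < g)
    (h : |(j : ℝ) * (g / ((n : ℝ) - 1)) - (i : ℝ) * (g / (n : ℝ))| <
      g / ((n : ℝ) - 1) - g / (n : ℝ)) :
    (i = 0 ∧ j = 0) ∨ (i = n ∧ j = n - 1) := by
  have hn1 : (1 : ℝ) < (n : ℝ) := by exact_mod_cast hn.trans_lt' (by norm_num)
  have hn0 : (0 : ℝ) < (n : ℝ) := by linarith
  have hnm1 : (0 : ℝ) < (n : ℝ) - 1 := by linarith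
  -- key: the integer a = j*n - i*(n-1) satisfies |a| < 1
  have key : ((j : ℝ) * n - (i : ℝ) * ((n : ℝ) - 1)) = 0 := by
    have hfac : g / ((n : ℝ) - 1) - g / (n : ℝ) = g / (((n : ℝ) - 1) * n) := by
      field_simp; ring
    have hlhs : (j : ℝ) * (g / ((n : ℝ) - 1)) - (i : ℝ) * (g / (n : ℝ)) =
        ((j : ℝ) * n - (i : ℝ) * ((n : ℝ) - 1)) * (g / (((n : ℝ) - 1) * n)) := by
      field_simp
    rw [hlhs, hfac, abs_mul] at h
    have hgpos : 0 < g / (((n : ℝ) - 1) * n) := by positivity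
    rw [abs_of_pos hgpos] at h
    have habs : |(j : ℝ) * n - (i : ℝ) * ((n : ℝ) - 1)| < 1 := by
      nlinarith [abs_nonneg ((j : ℝ) * n - (i : ℝ) * ((n : ℝ) - 1))]
    -- it's an integer
    have hint : ((j : ℝ) * n - (i : ℝ) * ((n : ℝ) - 1)) =
        (((j : ℤ) * n - (i : ℤ) * ((n : ℤ) - 1) : ℤ) : ℝ) := by push_cast; ring
    rw [hint] at habs ⊢
    rw [← Int.cast_abs] at habs
    have h1 : |(j : ℤ) * n - (i : ℤ) * ((n : ℤ) - 1)| < 1 := by exact_mod_cast habs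
    have : ((j : ℤ) * n - (i : ℤ) * ((n : ℤ) - 1)) = 0 := Int.abs_lt_one_iff.mp h1
    exact_mod_cast congrArg (Int.cast : ℤ → ℝ) this
  -- back to naturals
  have heq : (j : ℤ) * n = (i : ℤ) * ((n : ℤ) - 1) := by
    have : ((j : ℝ) * n) = (i : ℝ) * ((n : ℝ) - 1) := by linarith
    have h2 : ((j : ℝ) * n) = (((i : ℤ) * ((n : ℤ) - 1) : ℤ) : ℝ) := by
      rw [this]; push_cast; ring
    exact_mod_cast h2
  have hnat : j * n = i * (n - 1) := by
    have : ((n : ℤ) - 1) = ((n - 1 : ℕ) : ℤ) := by omega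
    rw [this] at heq
    exact_mod_cast heq
  have hdvd : n ∣ i * (n - 1) := ⟨j, by rw [← hnat, mul_comm]⟩
  have hcop : Nat.Coprime n (n - 1) :=
    (Nat.coprime_self_sub_right (by omega)).mpr (Nat.coprime_one_right n)
  have hdi : n ∣ i := (Nat.Coprime.dvd_of_dvd_mul_right hcop hdvd)
  rcases Nat.eq_zero_or_pos i with h0 | hpos
  · left
    constructor
    · exact h0
    · subst h0; simp at hnat
      rcases hnat with h | h
      · exact h
      · omega
  · right
    have : i = n := le_antisymm hi (Nat.le_of_dvd hpos hdi)
    subst this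
    constructor
    · rfl
    · have : j * i = i * (i - 1) := hnat
      have hi1 : 0 < i := hpos
      nlinarith [Nat.sub_add_cancel (by omega : 1 ≤ i)]
end

section
/- Let n be a natural number with n ≥ 3 and let g, h be real numbers with 1/3 < h, h < g, g < 1/2, and g > (n² − n) · (1 − 2h). Consider the flow index type ι = Fin 2 ⊕ Fin n ⊕ Fin (n−1) with bandwidths b assigning h to each index in the Fin 2 component (type-A flows), g/n to each index in the Fin n component (type-B flows), and g/(n−1) to each index in the Fin (n−1) component (type-C flows). Then for every feasible assignment r : ι → Fin 2, all type-B flows are assigned to one common edge and all type-C flows are assigned to one common edge. -/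
open Finset

lemma count_split2 {α : Type*} [Fintype α] (f : α → Fin 2) :
    (univ.filter (fun i => f i = 0)).card + (univ.filter (fun i => f i = 1)).card
      = Fintype.card α := by
  have h := Finset.card_filter_add_card_filter_not
    (s := (univ : Finset α)) (p := fun i => f i = 0)
  rw [Finset.card_univ] at h
  have heq : univ.filter (fun a => ¬ f a = 0) = univ.filter (fun i => f i = 1) := by
    ext x
    simp only [Finset.mem_filter, Finset.mem_univ, true_and]
    have hlt := (f x).isLt
    simp only [Fin.ext_iff, Fin.val_zero, Fin.val_one]
    omega
  rw [heq] at h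
  exact h

lemma load_eq (n : ℕ) (g h : ℝ) (r : Fin 2 ⊕ Fin n ⊕ Fin (n - 1) → Fin 2) (e : Fin 2) :
    load (Sum.elim (fun _ : Fin 2 => h)
        (Sum.elim (fun _ : Fin n => g / (n : ℝ)) (fun _ : Fin (n - 1) => g / ((n : ℝ) - 1)))) r e
      = (univ.filter (fun i : Fin 2 => r (Sum.inl i) = e)).card * h
        + (univ.filter (fun i : Fin n => r (Sum.inr (Sum.inl i)) = e)).card * (g / (n : ℝ))
        + (univ.filter (fun i : Fin (n - 1) => r (Sum.inr (Sum.inr i)) = e)).card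
            * (g / ((n : ℝ) - 1)) := by
  unfold load
  rw [Finset.sum_filter, Fintype.sum_sum_type, Fintype.sum_sum_type]
  simp only [Sum.elim_inl, Sum.elim_inr]
  rw [← Finset.sum_filter, ← Finset.sum_filter, ← Finset.sum_filter,
    Finset.sum_const, Finset.sum_const, Finset.sum_const]
  simp [nsmul_eq_mul]
  ring

set_option maxHeartbeats 2000000 in
theorem stmt14 (n : ℕ) (hn : 3 ≤ n) (g h : ℝ)
    (hh : 1/3 < h) (hhg : h < g) (hg : g < 1/2)
    (hgn : g > ((n : ℝ)^2 - n) * (1 - 2*h))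
    (r : Fin 2 ⊕ Fin n ⊕ Fin (n - 1) → Fin 2)
    (hr : Feasible
      (Sum.elim (fun _ : Fin 2 => h)
        (Sum.elim (fun _ : Fin n => g / (n : ℝ)) (fun _ : Fin (n - 1) => g / ((n : ℝ) - 1)))) r) :
    (∃ e : Fin 2, ∀ k : Fin n, r (Sum.inr (Sum.inl k)) = e) ∧
    (∃ e : Fin 2, ∀ k : Fin (n - 1), r (Sum.inr (Sum.inr k)) = e) := by
  have hload0 := load_eq n g h r 0
  have hload1 := load_eq n g h r 1
  have hr0 := hr 0
  have hr1 := hr 1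
  rw [hload0] at hr0
  rw [hload1] at hr1
  set A0 := (univ.filter (fun i : Fin 2 => r (Sum.inl i) = 0)).card with hA0def
  set A1 := (univ.filter (fun i : Fin 2 => r (Sum.inl i) = 1)).card with hA1def
  set B0 := (univ.filter (fun i : Fin n => r (Sum.inr (Sum.inl i)) = 0)).card with hB0def
  set B1 := (univ.filter (fun i : Fin n => r (Sum.inr (Sum.inl i)) = 1)).card with hB1def
  set C0 := (univ.filter (fun i : Fin (n - 1) => r (Sum.inr (Sum.inr i)) = 0)).card with hC0def
  set C1 := (univ.filter (fun i : Fin (n - 1) => r (Sum.inr (Sum.inr i)) = 1)).card with hC1def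
  have hA : A0 + A1 = 2 := by
    have := count_split2 (fun i : Fin 2 => r (Sum.inl i))
    simpa [hA0def, hA1def] using this
  have hB : B0 + B1 = n := by
    have := count_split2 (fun i : Fin n => r (Sum.inr (Sum.inl i)))
    simpa [hB0def, hB1def] using this
  have hC : C0 + C1 = n - 1 := by
    have := count_split2 (fun i : Fin (n - 1) => r (Sum.inr (Sum.inr i)))
    simpa [hC0def, hC1def] using this
  clear_value A0 A1 B0 B1 C0 C1
  -- basic reals
  have hg0 : (0:ℝ) < g := by linarith
  have hnR : (3:ℝ) ≤ (n:ℝ) := by exact_mod_cast hn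
  have hnpos : (0:ℝ) < (n:ℝ) := by linarith
  have hn1pos : (0:ℝ) < (n:ℝ) - 1 := by linarith
  have h2h : (0:ℝ) < 1 - 2*h := by linarith
  have hMg : ((n:ℝ) * ((n:ℝ)-1)) * (1 - 2*h) < g := by nlinarith [hgn]
  have hBgap : 1 - 2*h < g / (n:ℝ) := by
    rw [lt_div_iff₀ hnpos]
    nlinarith [mul_nonneg (mul_nonneg hnpos.le h2h.le) (by linarith : (0:ℝ) ≤ (n:ℝ) - 2)]
  have hCgap : 1 - 2*h < g / ((n:ℝ)-1) := by
    rw [lt_div_iff₀ hn1pos]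
    nlinarith [mul_nonneg (mul_nonneg h2h.le hn1pos.le) hn1pos.le]
  have hBpos : (0:ℝ) < g / (n:ℝ) := div_pos hg0 hnpos
  have hCpos : (0:ℝ) < g / ((n:ℝ)-1) := div_pos hg0 hn1pos
  -- conclusions from counts
  have allB : ∀ e : Fin 2,
      (univ.filter (fun i : Fin n => r (Sum.inr (Sum.inl i)) = e)).card = n →
      ∀ k : Fin n, r (Sum.inr (Sum.inl k)) = e := by
    intro e he k
    have huniv : univ.filter (fun i : Fin n => r (Sum.inr (Sum.inl i)) = e) = univ := by
      apply Finset.eq_univ_of_card; simpa using he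
    have hk : k ∈ univ.filter (fun i : Fin n => r (Sum.inr (Sum.inl i)) = e) := by
      rw [huniv]; exact Finset.mem_univ k
    exact (Finset.mem_filter.mp hk).2
  have allC : ∀ e : Fin 2,
      (univ.filter (fun i : Fin (n - 1) => r (Sum.inr (Sum.inr i)) = e)).card = n - 1 →
      ∀ k : Fin (n - 1), r (Sum.inr (Sum.inr k)) = e := by
    intro e he k
    have huniv : univ.filter (fun i : Fin (n-1) => r (Sum.inr (Sum.inr i)) = e) = univ := by
      apply Finset.eq_univ_of_card; simpa using he
    have hk : k ∈ univ.filter (fun i : Fin (n-1) => r (Sum.inr (Sum.inr i)) = e) := by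
      rw [huniv]; exact Finset.mem_univ k
    exact (Finset.mem_filter.mp hk).2
  -- main goal reduces to computing counts
  suffices hmain : (B0 = 0 ∨ B0 = n) ∧ (C0 = 0 ∨ C0 = n - 1) by
    obtain ⟨hB0, hC0⟩ := hmain
    constructor
    · rcases hB0 with h' | h'
      · exact ⟨1, allB 1 (by rw [← hB1def]; omega)⟩
      · exact ⟨0, allB 0 (by rw [← hB0def]; omega)⟩
    · rcases hC0 with h' | h'
      · exact ⟨1, allC 1 (by rw [← hC1def]; omega)⟩
      · exact ⟨0, allC 0 (by rw [← hC0def]; omega)⟩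
  have hA0cases : A0 = 0 ∨ A0 = 1 ∨ A0 = 2 := by omega
  have castB0 : (0:ℝ) ≤ (B0:ℝ) := Nat.cast_nonneg _
  have castC0 : (0:ℝ) ≤ (C0:ℝ) := Nat.cast_nonneg _
  have castB1 : (0:ℝ) ≤ (B1:ℝ) := Nat.cast_nonneg _
  have castC1 : (0:ℝ) ≤ (C1:ℝ) := Nat.cast_nonneg _
  rcases hA0cases with hA0 | hA0 | hA0
  · -- A0 = 0, A1 = 2 : everything on edge 0
    have hA1 : A1 = 2 := by omega
    rw [hA1] at hr1
    push_cast at hr1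
    have hB1z : B1 = 0 := by
      by_contra hne
      have h1 : (1:ℝ) ≤ (B1:ℝ) := by exact_mod_cast Nat.one_le_iff_ne_zero.mpr hne
      linarith [mul_le_mul_of_nonneg_right h1 hBpos.le, mul_nonneg castC1 hCpos.le, hBgap]
    have hC1z : C1 = 0 := by
      by_contra hne
      have h1 : (1:ℝ) ≤ (C1:ℝ) := by exact_mod_cast Nat.one_le_iff_ne_zero.mpr hne
      linarith [mul_le_mul_of_nonneg_right h1 hCpos.le, mul_nonneg castB1 hBpos.le, hCgap]
    exact ⟨Or.inr (by omega), Or.inr (by omega)⟩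
  · -- A0 = 1, A1 = 1 : the interesting case
    have hA1 : A1 = 1 := by omega
    rw [hA0] at hr0
    rw [hA1] at hr1
    push_cast at hr0 hr1
    have hM0 : (0:ℝ) ≤ (n:ℝ) * ((n:ℝ)-1) := (mul_pos hnpos hn1pos).le
    have key : ∀ (B C : ℕ),
        h + (B:ℝ) * (g / n) + (C:ℝ) * (g / ((n:ℝ)-1)) ≤ 1 →
        B * (n - 1) + C * n ≤ n * (n - 1) := by
      intro B C hle
      have hdiv1 : (B:ℝ) * (g / n) * ((n:ℝ) * ((n:ℝ)-1)) = (B:ℝ) * ((n:ℝ)-1) * g := by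
        field_simp
      have hdiv2 : (C:ℝ) * (g / ((n:ℝ)-1)) * ((n:ℝ) * ((n:ℝ)-1)) = (C:ℝ) * (n:ℝ) * g := by
        field_simp
      have hprod := mul_le_mul_of_nonneg_right hle hM0
      have hmul : ((B:ℝ) * ((n:ℝ)-1) + (C:ℝ) * (n:ℝ)) * g
          ≤ (1 - h) * ((n:ℝ) * ((n:ℝ)-1)) := by linarith [hprod, hdiv1, hdiv2]
      have hlt : (1 - h) * ((n:ℝ) * ((n:ℝ)-1)) < ((n:ℝ) * ((n:ℝ)-1) + 1) * g := by
        linarith [hMg, mul_nonneg hM0 (by linarith : (0:ℝ) ≤ g - h)]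
      have hfin : (B:ℝ) * ((n:ℝ)-1) + (C:ℝ) * (n:ℝ) < (n:ℝ) * ((n:ℝ)-1) + 1 :=
        lt_of_mul_lt_mul_right (lt_of_le_of_lt hmul hlt) hg0.le
      have hcast : ((B * (n-1) + C * n : ℕ) : ℝ) < ((n * (n-1) + 1 : ℕ) : ℝ) := by
        push_cast [Nat.cast_sub (by omega : 1 ≤ n)]
        linarith [hfin]
      have hnat : B * (n-1) + C * n < n * (n-1) + 1 := by exact_mod_cast hcast
      exact Nat.lt_succ_iff.mp hnat
    have k0 : B0 * (n - 1) + C0 * n ≤ n * (n - 1) := key B0 C0 (by linarith)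
    have k1 : B1 * (n - 1) + C1 * n ≤ n * (n - 1) := key B1 C1 (by linarith)
    have hsum : B0 * (n-1) + C0 * n + (B1 * (n-1) + C1 * n) = 2 * (n * (n-1)) := by
      calc B0 * (n-1) + C0 * n + (B1 * (n-1) + C1 * n)
          = (B0 + B1) * (n-1) + (C0 + C1) * n := by ring
        _ = n * (n-1) + (n-1) * n := by rw [hB, hC]
        _ = 2 * (n * (n-1)) := by ring
    have keq : B0 * (n - 1) + C0 * n = n * (n - 1) := by
      have hge : n * (n-1) ≤ B0 * (n-1) + C0 * n := by linarith
      exact le_antisymm k0 hge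
    -- number theory: n divides B0
    have hCle : C0 ≤ n - 1 := by omega
    have hdvd : n ∣ B0 * (n - 1) := by
      refine ⟨n - 1 - C0, ?_⟩
      zify [hCle, (by omega : 1 ≤ n), (by omega : C0 ≤ n - 1)] at keq ⊢
      linarith
    have hcop : Nat.Coprime n (n - 1) := by
      have h1 : Nat.Coprime ((n - 1) + 1) (n - 1) := by
        simpa using Nat.coprime_add_self_left.mpr (Nat.coprime_one_left _)
      rwa [(by omega : (n - 1) + 1 = n)] at h1
    have hdvdB : n ∣ B0 := Nat.Coprime.dvd_of_dvd_mul_right hcop hdvd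
    have hBle : B0 ≤ n := by
      have h2 := Finset.card_filter_le (univ : Finset (Fin n))
        (fun i => r (Sum.inr (Sum.inl i)) = 0)
      rw [← hB0def] at h2
      simpa using h2
    have hB0cases : B0 = 0 ∨ B0 = n := by
      rcases Nat.eq_zero_or_pos B0 with h' | h'
      · exact Or.inl h'
      · exact Or.inr (le_antisymm hBle (Nat.le_of_dvd h' hdvdB))
    refine ⟨hB0cases, ?_⟩
    rcases hB0cases with h' | h'
    · right
      rw [h'] at keq
      simp only [Nat.zero_mul, Nat.zero_add, zero_mul, zero_add] at keq
      have hkeq' : C0 * n = (n-1) * n := by rw [keq]; ring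
      exact Nat.eq_of_mul_eq_mul_right (by omega) hkeq'
    · left
      rw [h'] at keq
      have hzero : C0 * n = 0 := by
        have hz : n * (n-1) + C0 * n = n * (n-1) := keq
        have := Nat.zero_le (C0 * n)
        linarith
      rcases Nat.mul_eq_zero.mp hzero with h'' | h''
      · exact h''
      · omega
  · -- A0 = 2
    rw [hA0] at hr0
    push_cast at hr0
    have hB0z : B0 = 0 := by
      by_contra hne
      have h1 : (1:ℝ) ≤ (B0:ℝ) := by exact_mod_cast Nat.one_le_iff_ne_zero.mpr hne
      linarith [mul_le_mul_of_nonneg_right h1 hBpos.le, mul_nonneg castC0 hCpos.le, hBgap]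
    have hC0z : C0 = 0 := by
      by_contra hne
      have h1 : (1:ℝ) ≤ (C0:ℝ) := by exact_mod_cast Nat.one_le_iff_ne_zero.mpr hne
      linarith [mul_le_mul_of_nonneg_right h1 hCpos.le, mul_nonneg castB0 hBpos.le, hCgap]
    exact ⟨Or.inl hB0z, Or.inl hC0z⟩
end

section
/- Let n be a natural number with n ≥ 3 and let g, h be real numbers with 1/3 < h, h < g, g < 1/2, and g > (n² − n) · (1 − 2h). Consider the flow index type ι = Fin 2 ⊕ Fin n ⊕ Fin (n−1) ⊕ Fin 1 with bandwidths b assigning h to each index in the Fin 2 component (type-A flows), g/n to each index in the Fin n component (type-B flows), g/(n−1) to each index in the Fin (n−1) component (type-C flows), and 1 − 2h to the Fin 1 component (the new flow). Then a feasible assignment exists, and every feasible assignment r : ι → Fin 2 in which all type-B flows share one edge and all type-C flows share one edge must place all type-B and all type-C flows together on a single edge (with load 2g), and both type-A flows together with the new flow on the other edge (with load exactly 1). -/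
open Finset

theorem stmt15 (n : ℕ) (hn : 3 ≤ n) (g h : ℝ)
    (hh : 1/3 < h) (hhg : h < g) (hg : g < 1/2)
    (hgn : g > ((n : ℝ)^2 - n) * (1 - 2*h))
    (b : Fin 2 ⊕ Fin n ⊕ Fin (n - 1) ⊕ Fin 1 → ℝ)
    (hb : b = Sum.elim (fun _ : Fin 2 => h)
      (Sum.elim (fun _ : Fin n => g / (n : ℝ))
        (Sum.elim (fun _ : Fin (n - 1) => g / ((n : ℝ) - 1)) (fun _ : Fin 1 => 1 - 2*h)))) :
    (∃ r : Fin 2 ⊕ Fin n ⊕ Fin (n - 1) ⊕ Fin 1 → Fin 2, Feasible b r) ∧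
    ∀ r : Fin 2 ⊕ Fin n ⊕ Fin (n - 1) ⊕ Fin 1 → Fin 2, Feasible b r →
      (∃ e : Fin 2, ∀ k : Fin n, r (Sum.inr (Sum.inl k)) = e) →
      (∃ e : Fin 2, ∀ k : Fin (n - 1), r (Sum.inr (Sum.inr (Sum.inl k))) = e) →
      ∃ e e' : Fin 2, e ≠ e' ∧
        (∀ k : Fin n, r (Sum.inr (Sum.inl k)) = e) ∧
        (∀ k : Fin (n - 1), r (Sum.inr (Sum.inr (Sum.inl k))) = e) ∧
        load b r e = 2*g ∧
        (∀ a : Fin 2, r (Sum.inl a) = e') ∧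
        (∀ k : Fin 1, r (Sum.inr (Sum.inr (Sum.inr k))) = e') ∧
        load b r e' = 1 := by
  have hn1 : (n:ℝ) ≠ 0 := by positivity
  have hcast : ((n - 1 : ℕ) : ℝ) = (n:ℝ) - 1 := by
    have : 1 ≤ n := by omega
    push_cast [this]; ring
  have hn2 : (n:ℝ) - 1 ≠ 0 := by
    have : (3:ℝ) ≤ n := by exact_mod_cast hn
    linarith
  have sumB : ∀ (c : Prop) [Decidable c],
      (∑ _k : Fin n, if c then g / (n:ℝ) else 0) = if c then g else 0 := by
    intro c _
    by_cases hc : c <;> simp [hc, Finset.sum_const, Finset.card_univ, nsmul_eq_mul]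
    field_simp
  have sumC : ∀ (c : Prop) [Decidable c],
      (∑ _k : Fin (n-1), if c then g / ((n:ℝ)-1) else 0) = if c then g else 0 := by
    intro c _
    by_cases hc : c <;> simp [hc, Finset.sum_const, Finset.card_univ, nsmul_eq_mul, hcast]
    field_simp
  have key : ∀ (r : Fin 2 ⊕ Fin n ⊕ Fin (n - 1) ⊕ Fin 1 → Fin 2) (e : Fin 2),
      load b r e =
      (if r (Sum.inl 0) = e then h else 0) + (if r (Sum.inl 1) = e then h else 0)
    + (∑ k : Fin n, if r (Sum.inr (Sum.inl k)) = e then g/(n:ℝ) else 0)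
    + (∑ k : Fin (n-1), if r (Sum.inr (Sum.inr (Sum.inl k))) = e then g/((n:ℝ)-1) else 0)
    + (if r (Sum.inr (Sum.inr (Sum.inr 0))) = e then 1-2*h else 0) := by
    intro r e
    rw [load, Finset.sum_filter, hb]
    simp [Fintype.sum_sum_type, Fin.sum_univ_two, Fin.sum_univ_one]
    ring
  have two01 : ∀ v : Fin 2, v = 0 ∨ v = 1 := by decide
  constructor
  · refine ⟨Sum.elim (fun _ => 1) (Sum.elim (fun _ => 0) (Sum.elim (fun _ => 0) (fun _ => 1))), ?_⟩
    intro e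
    have eqB : (n:ℝ) * (g/(n:ℝ)) = g := by field_simp
    have eqC : ((n-1:ℕ):ℝ) * (g/((n:ℝ)-1)) = g := by rw [hcast]; field_simp
    rw [key]
    simp only [Sum.elim_inl, Sum.elim_inr]
    rcases two01 e with rfl | rfl <;>
      simp [Finset.sum_const, Finset.card_univ, nsmul_eq_mul, eqB, eqC] <;> linarith
  · rintro r hr ⟨eB, hB⟩ ⟨eC, hC⟩
    have key2 : ∀ e : Fin 2, load b r e =
        (if r (Sum.inl 0) = e then h else 0) + (if r (Sum.inl 1) = e then h else 0)
      + (if eB = e then g else 0) + (if eC = e then g else 0)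
      + (if r (Sum.inr (Sum.inr (Sum.inr 0))) = e then 1-2*h else 0) := by
      intro e
      rw [key]
      simp only [hB, hC, sumB, sumC]
    have hf0 := hr 0
    have hf1 := hr 1
    rw [key2] at hf0 hf1
    obtain rfl | rfl := two01 eB <;> obtain rfl | rfl := two01 eC <;>
      rcases two01 (r (Sum.inl 0)) with hx0 | hx0 <;>
      rcases two01 (r (Sum.inl 1)) with hx1 | hx1 <;>
      rcases two01 (r (Sum.inr (Sum.inr (Sum.inr 0)))) with hxd | hxd <;>
      simp only [hx0, hx1, hxd] at hf0 hf1 <;>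
      simp only [Fin.isValue, if_pos, if_neg, (by decide : ((0:Fin 2) = 1) = False),
        (by decide : ((1:Fin 2) = 0) = False), (by decide : ((0:Fin 2) = 0) = True),
        (by decide : ((1:Fin 2) = 1) = True), if_true, if_false] at hf0 hf1 <;>
      first
      | (exfalso; linarith)
      | (refine ⟨0, 1, by decide, hB, hC, ?_, ?_, ?_, ?_⟩
         · rw [key2]; simp [hx0, hx1, hxd]; linarith
         · intro a; rcases two01 a with rfl | rfl; exact hx0; exact hx1
         · intro k; rw [Subsingleton.elim k 0]; exact hxd
         · rw [key2]; simp [hx0, hx1, hxd]; linarith)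
      | (refine ⟨1, 0, by decide, hB, hC, ?_, ?_, ?_, ?_⟩
         · rw [key2]; simp [hx0, hx1, hxd]; linarith
         · intro a; rcases two01 a with rfl | rfl; exact hx0; exact hx1
         · intro k; rw [Subsingleton.elim k 0]; exact hxd
         · rw [key2]; simp [hx0, hx1, hxd]; linarith)
end

section
/- Let n be a natural number with n ≥ 3 and let g, h be real numbers with 1/3 < h, h < g, g < 1/2, and g > (n² − n) · (1 − 2h). Consider the flow index type ι = Fin 2 ⊕ Fin n ⊕ Fin (n−1) with bandwidths h (type-A flows), g/n (type-B flows) and g/(n−1) (type-C flows), let r₀ : ι → Fin 2 place the first type-A flow and all type-C flows on edge 0 and the second type-A flow and all type-B flows on edge 1, and extend ι by one new flow of bandwidth 1 − 2h. Then every feasible assignment r of all 2n + 2 flows in which all type-B flows share an edge and all type-C flows share an edge disagrees with r₀ on at least n of the original 2n + 1 flow indices; that is, accommodating the new flow requires rerouting at least n flows (an n-swap). -/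
set_option maxHeartbeats 1000000


open Finset

theorem stmt17 (n : ℕ) (hn : 3 ≤ n) (g h : ℝ)
    (hh : 1/3 < h) (hhg : h < g) (hg : g < 1/2)
    (hgn : g > ((n : ℝ)^2 - n) * (1 - 2*h))
    -- bandwidths of the 2n+1 original flows together with the new flow of bandwidth 1-2h
    (b' : (Fin 2 ⊕ Fin n ⊕ Fin (n - 1)) ⊕ Fin 1 → ℝ)
    (hb' : b' = Sum.elim
      (Sum.elim (fun _ : Fin 2 => h)
        (Sum.elim (fun _ : Fin n => g / (n : ℝ)) (fun _ : Fin (n - 1) => g / ((n : ℝ) - 1))))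
      (fun _ : Fin 1 => 1 - 2*h))
    -- the original assignment of the 2n+1 flows
    (r₀ : Fin 2 ⊕ Fin n ⊕ Fin (n - 1) → Fin 2)
    (hr₀ : r₀ = Sum.elim (fun a : Fin 2 => if a = 0 then (0 : Fin 2) else 1)
      (Sum.elim (fun _ : Fin n => (1 : Fin 2)) (fun _ : Fin (n - 1) => (0 : Fin 2))))
    -- any feasible assignment of all 2n+2 flows, keeping type-B flows together
    -- and type-C flows together
    (r : (Fin 2 ⊕ Fin n ⊕ Fin (n - 1)) ⊕ Fin 1 → Fin 2)
    (hr : Feasible b' r)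
    (hB : ∃ e : Fin 2, ∀ k : Fin n, r (Sum.inl (Sum.inr (Sum.inl k))) = e)
    (hC : ∃ e : Fin 2, ∀ k : Fin (n - 1), r (Sum.inl (Sum.inr (Sum.inr k))) = e) :
    n ≤ (univ.filter
      (fun i : Fin 2 ⊕ Fin n ⊕ Fin (n - 1) => r (Sum.inl i) ≠ r₀ i)).card := by
  obtain ⟨eB, heB⟩ := hB
  obtain ⟨eC, heC⟩ := hC
  have hn0 : ((n : ℝ)) ≠ 0 := by
    have : (0:ℝ) < n := by exact_mod_cast Nat.lt_of_lt_of_le (by norm_num) hn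
    linarith
  have hn1 : ((n : ℝ) - 1) ≠ 0 := by
    have : (3:ℝ) ≤ n := by exact_mod_cast hn
    linarith
  have hc : ((n - 1 : ℕ) : ℝ) = (n : ℝ) - 1 := by
    have : 1 ≤ n := by omega
    push_cast [this]
    ring
  have hload : ∀ f : Fin 2, load b' r f =
      (if r (Sum.inl (Sum.inl 0)) = f then h else 0)
    + (if r (Sum.inl (Sum.inl 1)) = f then h else 0)
    + (if eB = f then g else 0) + (if eC = f then g else 0)
    + (if r (Sum.inr 0) = f then 1 - 2*h else 0) := by
    intro f
    rw [load, Finset.sum_filter, Fintype.sum_sum_type, Fintype.sum_sum_type,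
      Fintype.sum_sum_type]
    simp only [hb', Sum.elim_inl, Sum.elim_inr, heB, heC]
    rw [Fin.sum_univ_two, Fin.sum_univ_one]
    simp only [Finset.sum_ite_irrel, Finset.sum_const, Finset.card_univ, Fintype.card_fin,
      nsmul_eq_mul, Finset.sum_const_zero, hc]
    split_ifs <;> field_simp <;> ring
  have htwo : ∀ x : Fin 2, x = 0 ∨ x = 1 := by decide
  have hkey : (eB = 1 ∧ eC = 1 ∧ r (Sum.inl (Sum.inl 1)) = 0)
            ∨ (eB = 0 ∧ eC = 0 ∧ r (Sum.inl (Sum.inl 0)) = 1) := by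
    have h0 := hr 0
    have h1 := hr 1
    rw [hload 0] at h0
    rw [hload 1] at h1
    rcases htwo (r (Sum.inl (Sum.inl 0))) with hA0 | hA0 <;>
    rcases htwo (r (Sum.inl (Sum.inl 1))) with hA1 | hA1 <;>
    rcases htwo eB with hB' | hB' <;>
    rcases htwo eC with hC' | hC' <;>
    rcases htwo (r (Sum.inr 0)) with hN | hN <;>
      simp only [hA0, hA1, hB', hC', hN, if_true, if_pos, if_neg,
        show ((0:Fin 2) = 1) = False by simp, show ((1:Fin 2) = 0) = False by simp,
        show ((0:Fin 2) = 0) = True by simp, show ((1:Fin 2) = 1) = True by simp,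
        if_false, ite_true, ite_false, and_true, true_and, and_false, false_and,
        or_true, true_or, or_false, false_or] at h0 h1 ⊢ <;>
      first
        | trivial
        | linarith
  rcases hkey with ⟨hB1, hC1, hA1⟩ | ⟨hB0, hC0, hA0⟩
  · -- differences: A1 and all C flows; count = n
    set T : Finset (Fin 2 ⊕ Fin n ⊕ Fin (n - 1)) :=
      insert (Sum.inl 1) ((univ : Finset (Fin (n-1))).image (fun k => Sum.inr (Sum.inr k)))
      with hT
    have hsub : T ⊆ univ.filter
        (fun i : Fin 2 ⊕ Fin n ⊕ Fin (n - 1) => r (Sum.inl i) ≠ r₀ i) := by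
      intro i hi
      simp only [hT, Finset.mem_insert, Finset.mem_image, Finset.mem_univ, true_and] at hi
      rcases hi with rfl | ⟨k, rfl⟩
      · simp [hr₀, hA1]
      · simp [hr₀, heC k, hC1]
    have hcard : T.card = n := by
      rw [hT, Finset.card_insert_of_notMem (by simp), Finset.card_image_of_injective _
        (fun a b hab => by simpa using hab)]
      simp only [Finset.card_univ, Fintype.card_fin]
      omega
    calc n = T.card := hcard.symm
      _ ≤ _ := Finset.card_le_card hsub
  · -- differences include all B flows; count ≥ n
    set T : Finset (Fin 2 ⊕ Fin n ⊕ Fin (n - 1)) :=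
      (univ : Finset (Fin n)).image (fun k => Sum.inr (Sum.inl k)) with hT
    have hsub : T ⊆ univ.filter
        (fun i : Fin 2 ⊕ Fin n ⊕ Fin (n - 1) => r (Sum.inl i) ≠ r₀ i) := by
      intro i hi
      simp only [hT, Finset.mem_image, Finset.mem_univ, true_and] at hi
      obtain ⟨k, rfl⟩ := hi
      simp [hr₀, heB k, hB0]
    have hcard : T.card = n := by
      rw [hT, Finset.card_image_of_injective _ (fun a b hab => by simpa using hab)]
      simp
    calc n = T.card := hcard.symm
      _ ≤ _ := Finset.card_le_card hsub
end

section
/- Let m be a natural number with m ≥ 1 and consider 3m flows indexed by Fin 3 × Fin m with bandwidths b (0, k) = 1/5, b (1, k) = 7/20 and b (2, k) = 9/20 for every k : Fin m, assigned to m edges indexed by Fin m, each of capacity 1. Then for every feasible assignment r : Fin 3 × Fin m → Fin m, every edge carries exactly one flow of bandwidth 1/5, exactly one flow of bandwidth 7/20 and exactly one flow of bandwidth 9/20, and the load of every edge equals exactly 1. -/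
/-!
Summing the loads over all `m` edges gives the total bandwidth `m (1/5 + 7/20 + 9/20) = m`, so a
feasible assignment loads every edge to exactly `1`. Writing `a, b, c` for the numbers of flows of
each kind on an edge, this reads `4a + 7b + 9c = 20`, whose only solutions are `(5, 0, 0)` and
`(1, 1, 1)`. Hence each edge carries at most one flow of bandwidth `7/20`; as there are `m` of them
on `m` edges, every edge carries exactly one, which forces `(1, 1, 1)` everywhere.
-/

open Finset

theorem eq_one_of_le_one_of_sum_eq_card {κ M : Type*} [Fintype κ] [AddCommMonoidWithOne M]
    [PartialOrder M] [IsOrderedCancelAddMonoid M] {f : κ → M} (hle : ∀ x, f x ≤ 1)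
    (hsum : ∑ x, f x = Fintype.card κ) (x : κ) : f x = 1 :=
  (sum_eq_sum_iff_of_le fun x _ => hle x).1 (by simpa using hsum) x (mem_univ x)

theorem sum_load {ι : Type*} [Fintype ι] {m : ℕ} (b : ι → ℝ) (r : ι → Fin m) :
    ∑ e, load b r e = ∑ i, b i :=
  sum_fiberwise univ r b

theorem Feasible.load_eq_one {ι : Type*} [Fintype ι] {m : ℕ} {b : ι → ℝ} {r : ι → Fin m}
    (hr : Feasible b r) (htotal : ∑ i, b i = m) (e : Fin m) : load b r e = 1 :=
  eq_one_of_le_one_of_sum_eq_card hr (by simpa [sum_load] using htotal) e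

theorem load_eq_sum_card_mul {α κ : Type*} [Fintype α] [Fintype κ] {m : ℕ} (c : α → ℝ)
    (r : α × κ → Fin m) (e : Fin m) :
    load (fun p => c p.1) r e = ∑ i, #{k | r (i, k) = e} * c i := by
  simp only [load]
  rw [sum_filter, Fintype.sum_prod_type]
  simp only [← sum_filter, sum_const, nsmul_eq_mul]

theorem four_seven_nine_eq_twenty_iff {a b c : ℕ} :
    4 * a + 7 * b + 9 * c = 20 ↔ (a = 5 ∧ b = 0 ∧ c = 0) ∨ (a = 1 ∧ b = 1 ∧ c = 1) := by
  constructor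
  · intro h
    have hb : b ≤ 2 := by omega
    have hc : c ≤ 2 := by omega
    interval_cases b <;> interval_cases c <;> omega
  · omega

theorem load_eq_one_iff_four_seven_nine {κ : Type*} [Fintype κ] {m : ℕ} (r : Fin 3 × κ → Fin m)
    (e : Fin m) :
    load (fun p => ![(1 : ℝ)/5, 7/20, 9/20] p.1) r e = 1 ↔
      4 * #{k | r (0, k) = e} + 7 * #{k | r (1, k) = e} + 9 * #{k | r (2, k) = e} = 20 := by
  rw [load_eq_sum_card_mul, Fin.sum_univ_three, ← Nat.cast_inj (R := ℝ)]
  simp only [Matrix.cons_val_zero, Matrix.cons_val_one, Matrix.cons_val_two, Matrix.tail_cons,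
    Matrix.head_cons, Nat.cast_add, Nat.cast_mul, Nat.cast_ofNat]
  constructor <;> intro h <;> linarith

theorem stmt18_general (m : ℕ)
    (b : Fin 3 × Fin m → ℝ) (hb : b = fun p => ![(1 : ℝ)/5, 7/20, 9/20] p.1)
    (r : Fin 3 × Fin m → Fin m) (hr : Feasible b r) :
    ∀ e : Fin m,
      (∃! k : Fin m, r ((0 : Fin 3), k) = e) ∧
      (∃! k : Fin m, r ((1 : Fin 3), k) = e) ∧
      (∃! k : Fin m, r ((2 : Fin 3), k) = e) ∧
      load b r e = 1 := by
  subst hb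
  have hload : ∀ e, load _ r e = 1 :=
    hr.load_eq_one (by simp [Fintype.sum_prod_type, Fin.sum_univ_three]; ring)
  have hcount e :=
    four_seven_nine_eq_twenty_iff.1 ((load_eq_one_iff_four_seven_nine r e).1 (hload e))
  have hmiddle : ∀ e, #{k | r (1, k) = e} = 1 :=
    eq_one_of_le_one_of_sum_eq_card (fun e => by have := hcount e; omega)
      (by simpa using (card_eq_sum_card_fiberwise (s := univ) fun k _ => mem_univ (r (1, k))).symm)
  intro e
  obtain ⟨-, hzero, -⟩ | ⟨h0, h1, h2⟩ := hcount e
  · simp [hmiddle e] at hzero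
  simp only [Fintype.existsUnique_iff_card_one]
  exact ⟨h0, h1, h2, hload e⟩

theorem stmt18 (m : ℕ) (hm : 1 ≤ m)
    (b : Fin 3 × Fin m → ℝ) (hb : b = fun p => ![(1 : ℝ)/5, 7/20, 9/20] p.1)
    (r : Fin 3 × Fin m → Fin m) (hr : Feasible b r) :
    ∀ e : Fin m,
      (∃! k : Fin m, r ((0 : Fin 3), k) = e) ∧
      (∃! k : Fin m, r ((1 : Fin 3), k) = e) ∧
      (∃! k : Fin m, r ((2 : Fin 3), k) = e) ∧
      load b r e = 1 :=
  stmt18_general m b hb r hr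
end

section
/- Let m be a natural number with m ≥ 2 and consider 2m + 1 flows: m flows of bandwidth 7/20, m flows of bandwidth 9/20, and one flow of bandwidth 3/10, assigned to m edges each of capacity 1. Then a feasible assignment exists, and in every feasible assignment the 3/10-flow shares its edge with exactly two of the 7/20-flows and with no other flow (so that edge has load exactly 1), while every other edge carries at most two flows. -/
open Finset

lemma load_formula (m : ℕ) (r : Fin m ⊕ Fin m ⊕ Fin 1 → Fin m) (e : Fin m) :
    load (Sum.elim (fun _ : Fin m => (7 : ℝ)/20)
      (Sum.elim (fun _ : Fin m => (9 : ℝ)/20) (fun _ : Fin 1 => (3 : ℝ)/10))) r e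
    = ((univ.filter (fun k : Fin m => r (Sum.inl k) = e)).card : ℝ) * (7/20)
    + ((univ.filter (fun k : Fin m => r (Sum.inr (Sum.inl k)) = e)).card : ℝ) * (9/20)
    + (if r (Sum.inr (Sum.inr 0)) = e then (3:ℝ)/10 else 0) := by
  unfold load
  rw [Finset.sum_filter, Fintype.sum_sum_type, Fintype.sum_sum_type, Fin.sum_univ_one]
  simp only [Sum.elim_inl, Sum.elim_inr]
  rw [← Finset.sum_filter, ← Finset.sum_filter, Finset.sum_const, Finset.sum_const]
  simp [nsmul_eq_mul]
  ring

lemma card_formula (m : ℕ) (r : Fin m ⊕ Fin m ⊕ Fin 1 → Fin m) (e : Fin m) :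
    (univ.filter (fun i : Fin m ⊕ Fin m ⊕ Fin 1 => r i = e)).card
    = (univ.filter (fun k : Fin m => r (Sum.inl k) = e)).card
    + (univ.filter (fun k : Fin m => r (Sum.inr (Sum.inl k)) = e)).card
    + (if r (Sum.inr (Sum.inr 0)) = e then 1 else 0) := by
  rw [Finset.card_filter, Fintype.sum_sum_type, Fintype.sum_sum_type]
  rw [← Finset.card_filter, ← Finset.card_filter, Fin.sum_univ_one]
  omega
lemma uniq (m : ℕ) (hm : 2 ≤ m)
    (r : Fin m ⊕ Fin m ⊕ Fin 1 → Fin m)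
    (hf : Feasible (Sum.elim (fun _ : Fin m => (7 : ℝ)/20)
      (Sum.elim (fun _ : Fin m => (9 : ℝ)/20) (fun _ : Fin 1 => (3 : ℝ)/10))) r) :
      (univ.filter (fun k : Fin m => r (Sum.inl k) = r (Sum.inr (Sum.inr 0)))).card = 2 ∧
      (∀ k : Fin m, r (Sum.inr (Sum.inl k)) ≠ r (Sum.inr (Sum.inr 0))) ∧
      load (Sum.elim (fun _ : Fin m => (7 : ℝ)/20)
        (Sum.elim (fun _ : Fin m => (9 : ℝ)/20) (fun _ : Fin 1 => (3 : ℝ)/10))) r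
        (r (Sum.inr (Sum.inr 0))) = 1 ∧
      (∀ e : Fin m, e ≠ r (Sum.inr (Sum.inr 0)) →
        (univ.filter (fun i : Fin m ⊕ Fin m ⊕ Fin 1 => r i = e)).card ≤ 2) := by
  set e0 := r (Sum.inr (Sum.inr 0)) with he0
  have key : ∀ e : Fin m, e ≠ e0 →
      7 * (univ.filter (fun k : Fin m => r (Sum.inl k) = e)).card
      + 9 * (univ.filter (fun k : Fin m => r (Sum.inr (Sum.inl k)) = e)).card ≤ 20 := by
    intro e he
    have h := hf e
    rw [load_formula] at h
    rw [if_neg (fun h' => he h'.symm)] at h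
    have : (7 * (univ.filter (fun k : Fin m => r (Sum.inl k) = e)).card
      + 9 * (univ.filter (fun k : Fin m => r (Sum.inr (Sum.inl k)) = e)).card : ℝ) ≤ 20 := by
      push_cast; linarith
    exact_mod_cast this
  have key0 : 7 * (univ.filter (fun k : Fin m => r (Sum.inl k) = e0)).card
      + 9 * (univ.filter (fun k : Fin m => r (Sum.inr (Sum.inl k)) = e0)).card ≤ 14 := by
    have h := hf e0
    rw [load_formula, if_pos rfl] at h
    have : (7 * (univ.filter (fun k : Fin m => r (Sum.inl k) = e0)).card
      + 9 * (univ.filter (fun k : Fin m => r (Sum.inr (Sum.inl k)) = e0)).card : ℝ) ≤ 14 := by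
      push_cast; linarith
    exact_mod_cast this
  have hsmall : ∀ e : Fin m, e ≠ e0 →
      (univ.filter (fun i : Fin m ⊕ Fin m ⊕ Fin 1 => r i = e)).card ≤ 2 := by
    intro e he
    rw [card_formula, if_neg (fun h' => he h'.symm)]
    have := key e he
    omega
  have htotal : ∑ e : Fin m, (univ.filter (fun i : Fin m ⊕ Fin m ⊕ Fin 1 => r i = e)).card
      = 2 * m + 1 := by
    rw [← Finset.card_eq_sum_card_fiberwise (fun x _ => mem_univ _)]
    simp [Fintype.card_sum]
    omega
  have hbig : 3 ≤ (univ.filter (fun i : Fin m ⊕ Fin m ⊕ Fin 1 => r i = e0)).card := by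
    by_contra hc
    push_neg at hc
    have hsum : ∑ e : Fin m, (univ.filter (fun i : Fin m ⊕ Fin m ⊕ Fin 1 => r i = e)).card
        ≤ ∑ _e : Fin m, 2 := by
      apply Finset.sum_le_sum
      intro e _
      by_cases he : e = e0
      · subst he; omega
      · exact hsmall e he
    rw [htotal, Finset.sum_const, Finset.card_univ, Fintype.card_fin, smul_eq_mul] at hsum
    omega
  have hcard0 : (univ.filter (fun i : Fin m ⊕ Fin m ⊕ Fin 1 => r i = e0)).card
      = (univ.filter (fun k : Fin m => r (Sum.inl k) = e0)).card
      + (univ.filter (fun k : Fin m => r (Sum.inr (Sum.inl k)) = e0)).card + 1 := by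
    rw [card_formula, if_pos rfl]
  have hA2 : (univ.filter (fun k : Fin m => r (Sum.inl k) = e0)).card = 2 := by omega
  have hB0 : (univ.filter (fun k : Fin m => r (Sum.inr (Sum.inl k)) = e0)).card = 0 := by omega
  refine ⟨hA2, ?_, ?_, hsmall⟩
  · intro k hk
    have : k ∈ univ.filter (fun k : Fin m => r (Sum.inr (Sum.inl k)) = e0) := by simp [hk]
    rw [Finset.card_eq_zero.mp hB0] at this
    exact absurd this (Finset.notMem_empty k)
  · rw [load_formula, if_pos rfl, hA2, hB0]
    norm_num
lemma exist (m : ℕ) (hm : 2 ≤ m) :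
    ∃ r : Fin m ⊕ Fin m ⊕ Fin 1 → Fin m,
      Feasible (Sum.elim (fun _ : Fin m => (7 : ℝ)/20)
        (Sum.elim (fun _ : Fin m => (9 : ℝ)/20) (fun _ : Fin 1 => (3 : ℝ)/10))) r := by
  refine ⟨fun i => match i with
    | Sum.inl k => if (k : ℕ) < 2 then ⟨0, by omega⟩ else k
    | Sum.inr (Sum.inl j) => if (j : ℕ) < 2 then ⟨1, by omega⟩ else j
    | Sum.inr (Sum.inr _) => ⟨0, by omega⟩, ?_⟩
  intro e
  rw [load_formula]
  rcases lt_trichotomy (e : ℕ) 1 with he | he | he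
  · -- e = 0
    have h1 : (univ.filter (fun k : Fin m =>
        (if (k : ℕ) < 2 then (⟨0, by omega⟩ : Fin m) else k) = e)) =
        {(⟨0, by omega⟩ : Fin m), ⟨1, by omega⟩} := by
      ext k
      simp only [mem_filter, mem_univ, true_and, mem_insert, mem_singleton]
      split_ifs with h
      all_goals (simp only [Fin.ext_iff]; try omega)
    have h2 : (univ.filter (fun j : Fin m =>
        (if (j : ℕ) < 2 then (⟨1, by omega⟩ : Fin m) else j) = e)) = ∅ := by
      ext j
      simp only [mem_filter, mem_univ, true_and, notMem_empty, iff_false]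
      split_ifs with h
      all_goals (simp only [Fin.ext_iff]; try omega)
    simp only [h1, h2]
    rw [if_pos (by simp only [Fin.ext_iff]; omega)]
    rw [Finset.card_insert_of_notMem (by simp only [mem_singleton, Fin.ext_iff]; omega),
      Finset.card_singleton, Finset.card_empty]
    norm_num
  · -- e = 1
    have h1 : (univ.filter (fun k : Fin m =>
        (if (k : ℕ) < 2 then (⟨0, by omega⟩ : Fin m) else k) = e)) = ∅ := by
      ext k
      simp only [mem_filter, mem_univ, true_and, notMem_empty, iff_false]
      split_ifs with h
      all_goals (simp only [Fin.ext_iff]; try omega)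
    have h2 : (univ.filter (fun j : Fin m =>
        (if (j : ℕ) < 2 then (⟨1, by omega⟩ : Fin m) else j) = e)) =
        {(⟨0, by omega⟩ : Fin m), ⟨1, by omega⟩} := by
      ext j
      simp only [mem_filter, mem_univ, true_and, mem_insert, mem_singleton]
      split_ifs with h
      all_goals (simp only [Fin.ext_iff]; try omega)
    simp only [h1, h2]
    rw [if_neg (by simp only [Fin.ext_iff]; omega)]
    rw [Finset.card_insert_of_notMem (by simp only [mem_singleton, Fin.ext_iff]; omega),
      Finset.card_singleton, Finset.card_empty]
    norm_num
  · -- e ≥ 2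
    have h1 : (univ.filter (fun k : Fin m =>
        (if (k : ℕ) < 2 then (⟨0, by omega⟩ : Fin m) else k) = e)) = {e} := by
      ext k
      simp only [mem_filter, mem_univ, true_and, mem_singleton]
      split_ifs with h
      all_goals (simp only [Fin.ext_iff]; try omega)
    have h2 : (univ.filter (fun j : Fin m =>
        (if (j : ℕ) < 2 then (⟨1, by omega⟩ : Fin m) else j) = e)) = {e} := by
      ext j
      simp only [mem_filter, mem_univ, true_and, mem_singleton]
      split_ifs with h
      all_goals (simp only [Fin.ext_iff]; try omega)
    simp only [h1, h2]
    rw [if_neg (by simp only [Fin.ext_iff]; omega)]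
    rw [Finset.card_singleton]
    norm_num
theorem stmt19 (m : ℕ) (hm : 2 ≤ m)
    -- m flows of bandwidth 7/20, m flows of bandwidth 9/20, one flow of bandwidth 3/10
    (b : Fin m ⊕ Fin m ⊕ Fin 1 → ℝ)
    (hb : b = Sum.elim (fun _ : Fin m => (7 : ℝ)/20)
      (Sum.elim (fun _ : Fin m => (9 : ℝ)/20) (fun _ : Fin 1 => (3 : ℝ)/10))) :
    (∃ r : Fin m ⊕ Fin m ⊕ Fin 1 → Fin m, Feasible b r) ∧
    ∀ r : Fin m ⊕ Fin m ⊕ Fin 1 → Fin m, Feasible b r →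
      -- the 3/10-flow shares its edge with exactly two of the 7/20-flows …
      (univ.filter (fun k : Fin m => r (Sum.inl k) = r (Sum.inr (Sum.inr 0)))).card = 2 ∧
      -- … and with no 9/20-flow
      (∀ k : Fin m, r (Sum.inr (Sum.inl k)) ≠ r (Sum.inr (Sum.inr 0))) ∧
      -- so that edge has load exactly 1
      load b r (r (Sum.inr (Sum.inr 0))) = 1 ∧
      -- while every other edge carries at most two flows
      (∀ e : Fin m, e ≠ r (Sum.inr (Sum.inr 0)) →
        (univ.filter (fun i : Fin m ⊕ Fin m ⊕ Fin 1 => r i = e)).card ≤ 2) := by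
  subst hb
  exact ⟨exist m hm, fun r hf => uniq m hm r hf⟩
end
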